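/- The number of walks of length n between two vertices at distance k in the (q+1)-regular tree (q ≥ 1) equals S_q(n,k) = Σ_{t ∈ {k,k+2,...,n}} q^{(n-t)/2} (C(n,(n-t)/2) - C(n,(n-t)/2-1)) when n ≥ k and n - k is even, and equals 0 when n - k is odd or n < k. -/

import Mathlib

/-!
Split a walk of length `n + 1` from `a` to `b` into its first step `a → w` and a walk of length
`n` from `w` to `b`. In a `(q+1)`-regular tree, if `a = b` all `q + 1` neighbours `w` are at
distance `1` from `b`; otherwise exactly one neighbour is at distance `dist a b - 1` (the next
vertex of the unique path) and the other `q` are at distance `dist a b + 1`. So the walk count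
`N(n, k)` satisfies `N(0, k) = [k = 0]`, `N(n+1, 0) = (q+1) N(n, 1)` and
`N(n+1, k+1) = N(n, k) + q N(n, k+2)`. Writing `S_q(n, n - 2m) = Σ_{i ≤ m} q^i (C(n,i) - C(n,i-1))`,
the same recurrences follow from Pascal's rule, the case `k = 0` using
`C(2m+1, m+1) = C(2m+1, m)`.
-/

/-- Binomial coefficient `C(n,k)` with integer lower index, zero when `k < 0`. -/
def Cz (n : ℕ) (k : ℤ) : ℤ := if 0 ≤ k then (n.choose k.toNat : ℤ) else 0

/-- Ballot-type number `L(n,t) = C(n,(n-t)/2) - C(n,(n-t)/2 - 1)`. -/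
def Lnum (n t : ℕ) : ℤ :=
  Cz n (((n - t) / 2 : ℕ) : ℤ) - Cz n ((((n - t) / 2 : ℕ) : ℤ) - 1)

/-- `S_q(n,k) = Σ_{t ∈ {k,k+2,...,n}} q^{(n-t)/2} L(n,t)`, and `0` if `k > n`. -/
def Snum (q n k : ℕ) : ℤ :=
  if k ≤ n then
    ∑ j ∈ Finset.range ((n - k) / 2 + 1), (q : ℤ) ^ ((n - k) / 2 - j) * Lnum n (k + 2 * j)
  else 0

open Finset

lemma Cz_natCast (n m : ℕ) : Cz n m = n.choose m := by
  simp [Cz]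

lemma Cz_of_neg {k : ℤ} (n : ℕ) (h : k < 0) : Cz n k = 0 := by
  simp [Cz, h.not_ge]

lemma Cz_succ (n : ℕ) (k : ℤ) : Cz (n + 1) k = Cz n k + Cz n (k - 1) := by
  rcases lt_or_ge k 0 with h | h
  · rw [Cz_of_neg _ h, Cz_of_neg _ h, Cz_of_neg _ (by omega), add_zero]
  · lift k to ℕ using h
    cases k with
    | zero => simp [Cz]
    | succ k =>
      rw [Nat.cast_succ, add_sub_cancel_right, ← Nat.cast_succ, Cz_natCast, Cz_natCast,
        Cz_natCast, Nat.choose_succ_succ, Nat.cast_add, add_comm]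

/-- For `i ≤ n / 2` this is the ballot number `L(n, n - 2i)`. -/
def ballotDiff (n : ℕ) (i : ℤ) : ℤ := Cz n i - Cz n (i - 1)

lemma ballotDiff_of_neg {i : ℤ} (n : ℕ) (h : i < 0) : ballotDiff n i = 0 := by
  rw [ballotDiff, Cz_of_neg n h, Cz_of_neg n (by omega), sub_zero]

lemma ballotDiff_succ (n : ℕ) (i : ℤ) :
    ballotDiff (n + 1) i = ballotDiff n i + ballotDiff n (i - 1) := by
  simp only [ballotDiff, Cz_succ]
  ring

lemma ballotDiff_middle (m : ℕ) : ballotDiff (2 * m + 1) (m + 1) = 0 := by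
  rw [ballotDiff, add_sub_cancel_right, ← Nat.cast_succ, Cz_natCast, Cz_natCast,
    Nat.choose_symm_half, sub_self]

lemma Lnum_eq_ballotDiff (n t : ℕ) : Lnum n t = ballotDiff n ((n - t) / 2 : ℕ) := rfl

/-- `Snum q n (n - 2(m - 1))`, re-indexed by `i = (n - t) / 2`. -/
def weightedBallotSum (q n m : ℕ) : ℤ := ∑ i ∈ range m, (q : ℤ) ^ i * ballotDiff n i

lemma weightedBallotSum_succ_succ (q n m : ℕ) :
    weightedBallotSum q (n + 1) (m + 1) =
      weightedBallotSum q n (m + 1) + q * weightedBallotSum q n m := by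
  have shift : ∑ i ∈ range (m + 1), (q : ℤ) ^ i * ballotDiff n (i - 1) =
      q * weightedBallotSum q n m := by
    rw [sum_range_succ', Nat.cast_zero, zero_sub, ballotDiff_of_neg n (by norm_num), mul_zero,
      add_zero, weightedBallotSum, mul_sum]
    refine sum_congr rfl fun i _ => ?_
    rw [Nat.cast_succ, add_sub_cancel_right, pow_succ', mul_assoc]
  simp only [weightedBallotSum, ballotDiff_succ, mul_add, sum_add_distrib, shift]

lemma Snum_eq_weightedBallotSum {q n k m : ℕ} (h : n = k + 2 * m) :
    Snum q n k = weightedBallotSum q n (m + 1) := by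
  have hm : (n - k) / 2 = m := by omega
  rw [Snum, if_pos (by omega), hm, weightedBallotSum, ← sum_range_reflect]
  refine sum_congr rfl fun j hj => ?_
  rw [mem_range] at hj
  have hexp : m - (m + 1 - 1 - j) = j := by omega
  have hidx : (n - (k + 2 * (m + 1 - 1 - j))) / 2 = j := by omega
  rw [Lnum_eq_ballotDiff, hexp, hidx]

def treeWalkCount (q n k : ℕ) : ℤ :=
  if k ≤ n ∧ (2 : ℤ) ∣ (n : ℤ) - (k : ℤ) then Snum q n k else 0

lemma le_and_two_dvd_sub_iff {n k : ℕ} :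
    (k ≤ n ∧ (2 : ℤ) ∣ (n : ℤ) - (k : ℤ)) ↔ ∃ m, n = k + 2 * m := by
  constructor
  · rintro ⟨hk, c, hc⟩
    exact ⟨c.toNat, by omega⟩
  · rintro ⟨m, rfl⟩
    exact ⟨by omega, m, by push_cast; ring⟩

lemma treeWalkCount_of_eq {q n k m : ℕ} (h : n = k + 2 * m) :
    treeWalkCount q n k = weightedBallotSum q n (m + 1) := by
  rw [treeWalkCount, if_pos (le_and_two_dvd_sub_iff.mpr ⟨m, h⟩), Snum_eq_weightedBallotSum h]

lemma treeWalkCount_of_forall_ne {q n k : ℕ} (h : ∀ m, n ≠ k + 2 * m) :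
    treeWalkCount q n k = 0 := by
  rw [treeWalkCount, if_neg fun hc => (le_and_two_dvd_sub_iff.mp hc).elim h]

lemma treeWalkCount_zero (q k : ℕ) : treeWalkCount q 0 k = if k = 0 then 1 else 0 := by
  split_ifs with hk
  · rw [hk, treeWalkCount_of_eq (m := 0) rfl]
    simp [weightedBallotSum, ballotDiff, Cz]
  · exact treeWalkCount_of_forall_ne (by omega)

lemma treeWalkCount_succ_zero (q n : ℕ) :
    treeWalkCount q (n + 1) 0 = (q + 1) * treeWalkCount q n 1 := by
  by_cases h : ∃ m, n = 1 + 2 * m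
  · obtain ⟨m, rfl⟩ := h
    rw [treeWalkCount_of_eq (m := m + 1) (by ring), treeWalkCount_of_eq rfl,
      weightedBallotSum_succ_succ, weightedBallotSum, sum_range_succ, ← weightedBallotSum,
      add_comm 1, Nat.cast_succ, ballotDiff_middle, mul_zero, add_zero]
    ring
  · rw [treeWalkCount_of_forall_ne fun m hm => h ⟨m - 1, by omega⟩,
      treeWalkCount_of_forall_ne fun m hm => h ⟨m, hm⟩, mul_zero]

lemma treeWalkCount_succ_succ (q n k : ℕ) :
    treeWalkCount q (n + 1) (k + 1) = treeWalkCount q n k + q * treeWalkCount q n (k + 2) := by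
  by_cases h : ∃ m, n = k + 2 * m
  · obtain ⟨m, rfl⟩ := h
    have hnext : treeWalkCount q (k + 2 * m) (k + 2) = weightedBallotSum q (k + 2 * m) m := by
      cases m with
      | zero => exact treeWalkCount_of_forall_ne (by omega)
      | succ m => exact treeWalkCount_of_eq (by ring)
    rw [treeWalkCount_of_eq (m := m) (by ring), treeWalkCount_of_eq rfl, hnext,
      weightedBallotSum_succ_succ]
  · rw [treeWalkCount_of_forall_ne fun m hm => h ⟨m, by omega⟩,
      treeWalkCount_of_forall_ne fun m hm => h ⟨m, hm⟩,
      treeWalkCount_of_forall_ne fun m hm => h ⟨m + 1, by omega⟩, mul_zero, add_zero]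

namespace SimpleGraph

variable {V : Type*} {G : SimpleGraph V}

lemma card_finsetWalkLength_succ [DecidableEq V] [G.LocallyFinite] (n : ℕ) (u v : V) :
    #(G.finsetWalkLength (n + 1) u v) = ∑ w ∈ G.neighborFinset u, #(G.finsetWalkLength n w v) := by
  rw [finsetWalkLength, card_biUnion]
  · simp only [card_map, neighborFinset_def]
    exact sum_set_coe (f := fun w => #(G.finsetWalkLength n w v)) _
  · rintro ⟨x, hx⟩ - ⟨y, hy⟩ - hxy
    rw [Function.onFun, disjoint_iff_inf_le]
    intro p hp
    simp only [inf_eq_inter, mem_inter, mem_map] at hp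
    obtain ⟨⟨px, -, rfl⟩, ⟨py, -, hp⟩⟩ := hp
    cases hp
    simp at hxy

lemma natCard_walk_length_eq_card_finsetWalkLength [DecidableEq V] [G.LocallyFinite] (n : ℕ)
    (u v : V) :
    Nat.card {p : G.Walk u v // p.length = n} = #(G.finsetWalkLength n u v) := by
  rw [Nat.card_eq_fintype_card]
  exact card_set_walk_length_eq G u v n

lemma Connected.exists_adj_dist_add_one_eq (hG : G.Connected) {a b : V} (hab : a ≠ b) :
    ∃ w, G.Adj a w ∧ G.dist w b + 1 = G.dist a b := by
  obtain ⟨p, hp⟩ := hG.exists_walk_length_eq_dist a b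
  cases p with
  | nil => exact absurd rfl hab
  | @cons _ w _ h p =>
    refine ⟨w, h, le_antisymm ?_ ?_⟩
    · rw [← hp, Walk.length_cons]
      exact Nat.add_le_add_right (dist_le p) 1
    · calc G.dist a b ≤ G.dist a w + G.dist w b := hG.dist_triangle
        _ = G.dist w b + 1 := by rw [dist_eq_one_iff_adj.mpr h, add_comm]

/-- Both neighbours are the second vertex of the unique path from `a` to `b`. -/
lemma IsTree.eq_of_adj_of_dist_add_one_eq (hG : G.IsTree) {a b w₁ w₂ : V} (h₁ : G.Adj a w₁)
    (h₂ : G.Adj a w₂) (hd₁ : G.dist w₁ b + 1 = G.dist a b) (hd₂ : G.dist w₂ b + 1 = G.dist a b) :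
    w₁ = w₂ := by
  classical
  have exists_path : ∀ w (h : G.Adj a w), G.dist w b + 1 = G.dist a b →
      ∃ q : G.Walk w b, (q.cons h).IsPath := by
    intro w h hd
    obtain ⟨q, hq, hql⟩ := hG.connected.exists_path_of_dist w b
    refine ⟨q, hq.cons fun ha => ?_⟩
    have := dist_le (q.dropUntil a ha)
    have := q.length_dropUntil_le_length ha
    omega
  obtain ⟨q₁, hq₁⟩ := exists_path w₁ h₁ hd₁
  obtain ⟨q₂, hq₂⟩ := exists_path w₂ h₂ hd₂
  simpa using congrArg Walk.snd ((hG.existsUnique_path a b).unique hq₁ hq₂)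

lemma IsTree.sum_neighborFinset_dist [G.LocallyFinite] {M : Type*} [AddCommMonoid M]
    (hG : G.IsTree) (f : ℕ → M) {a b : V} (hab : a ≠ b) :
    ∑ w ∈ G.neighborFinset a, f (G.dist w b) =
      f (G.dist a b - 1) + (G.degree a - 1) • f (G.dist a b + 1) := by
  classical
  obtain ⟨w₀, hadj₀, hd₀⟩ := hG.connected.exists_adj_dist_add_one_eq hab
  have hmem : w₀ ∈ G.neighborFinset a := (mem_neighborFinset G a w₀).mpr hadj₀
  have hfar : ∀ w ∈ (G.neighborFinset a).erase w₀, G.dist w b = G.dist a b + 1 := by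
    intro w hw
    obtain ⟨hne, hw⟩ := mem_erase.mp hw
    have hadj := (mem_neighborFinset G a w).mp hw
    obtain h | h := hG.dist_eq_dist_add_one_of_adj b hadj <;>
      rw [dist_comm (u := b), dist_comm (u := b)] at h
    · exact absurd (hG.eq_of_adj_of_dist_add_one_eq hadj hadj₀ h.symm hd₀) hne
    · exact h
  rw [← add_sum_erase _ _ hmem, sum_congr rfl fun w hw => congrArg f (hfar w hw), sum_const,
    card_erase_of_mem hmem, card_neighborFinset_eq_degree, ← hd₀, Nat.add_sub_cancel]

theorem IsTree.natCard_walk_length_eq [G.LocallyFinite] {R : Type*} [Semiring R]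
    (hG : G.IsTree) {q : ℕ} (hdeg : ∀ v, G.degree v = q + 1) (T : ℕ → ℕ → R)
    (hT_zero : ∀ k, T 0 k = if k = 0 then 1 else 0)
    (hT_succ_zero : ∀ n, T (n + 1) 0 = (q + 1) * T n 1)
    (hT_succ_succ : ∀ n k, T (n + 1) (k + 1) = T n k + q * T n (k + 2))
    (n : ℕ) (a b : V) :
    (Nat.card {p : G.Walk a b // p.length = n} : R) = T n (G.dist a b) := by
  classical
  induction n generalizing a b with
  | zero =>
    rw [natCard_walk_length_eq_card_finsetWalkLength, hT_zero]
    obtain rfl | hab := eq_or_ne a b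
    · simp [finsetWalkLength]
    · simp [finsetWalkLength, hab, hG.connected.dist_eq_zero_iff]
  | succ n ih =>
    rw [natCard_walk_length_eq_card_finsetWalkLength, card_finsetWalkLength_succ, Nat.cast_sum]
    simp only [← natCard_walk_length_eq_card_finsetWalkLength, ih]
    obtain rfl | hab := eq_or_ne a b
    · have hdist : ∀ w ∈ G.neighborFinset a, T n (G.dist w a) = T n 1 := fun w hw => by
        rw [dist_eq_one_iff_adj.mpr ((mem_neighborFinset G a w).mp hw).symm]
      rw [sum_congr rfl hdist, sum_const, card_neighborFinset_eq_degree, hdeg, nsmul_eq_mul,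
        dist_self, hT_succ_zero, Nat.cast_succ]
    · obtain ⟨k, hk⟩ :=
        Nat.exists_eq_add_one_of_ne_zero (hG.connected.dist_eq_zero_iff.not.mpr hab)
      rw [hG.sum_neighborFinset_dist _ hab, hk, hT_succ_succ, hdeg, Nat.add_sub_cancel,
        Nat.add_sub_cancel, nsmul_eq_mul]

end SimpleGraph

theorem walk_count_regular_tree_general {V : Type*} (G : SimpleGraph V) (q : ℕ)
    (htree : G.IsTree) (hreg : ∀ v, (G.neighborSet v).ncard = q + 1)
    (u v : V) (n : ℕ) :
    ((G.dist u v ≤ n ∧ (2 : ℤ) ∣ (n : ℤ) - (G.dist u v : ℤ)) →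
      (Nat.card {p : G.Walk u v // p.length = n} : ℤ) = Snum q n (G.dist u v)) ∧
    (¬(G.dist u v ≤ n ∧ (2 : ℤ) ∣ (n : ℤ) - (G.dist u v : ℤ)) →
      Nat.card {p : G.Walk u v // p.length = n} = 0) := by
  have : G.LocallyFinite := fun v =>
    (Set.finite_of_ncard_ne_zero (hreg v ▸ q.succ_ne_zero)).fintype
  have hdeg : ∀ v, G.degree v = q + 1 := fun v => by
    rw [← G.card_neighborFinset_eq_degree, G.neighborFinset_def, ← Set.ncard_eq_toFinset_card',
      hreg]
  have hcount := htree.natCard_walk_length_eq hdeg (treeWalkCount q) (treeWalkCount_zero q)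
    (treeWalkCount_succ_zero q) (treeWalkCount_succ_succ q) n u v
  rw [treeWalkCount] at hcount
  refine ⟨fun h => ?_, fun h => ?_⟩
  · rw [hcount, if_pos h]
  · rw [if_neg h] at hcount
    exact_mod_cast hcount

/-- The number of walks of length `n` between two vertices at distance `k` in the
`(q+1)`-regular tree equals `S_q(n,k)` when `n ≥ k` and `n - k` is even, and `0` otherwise. -/
theorem walk_count_regular_tree {V : Type*} (G : SimpleGraph V) (q : ℕ) (hq : 1 ≤ q)
    (htree : G.IsTree) (hreg : ∀ v, (G.neighborSet v).ncard = q + 1)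
    (u v : V) (n : ℕ) :
    ((G.dist u v ≤ n ∧ (2 : ℤ) ∣ (n : ℤ) - (G.dist u v : ℤ)) →
      (Nat.card {p : G.Walk u v // p.length = n} : ℤ) = Snum q n (G.dist u v)) ∧
    (¬(G.dist u v ≤ n ∧ (2 : ℤ) ∣ (n : ℤ) - (G.dist u v : ℤ)) →
      Nat.card {p : G.Walk u v // p.length = n} = 0) :=
  walk_count_regular_tree_general G q htree hreg u v n
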